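/- Let F be a finite field with at least n elements and let k ≤ n be natural numbers. Then there exists an injective F-linear map G from (Fin k → F) to (Fin n → F) such that every nonzero u : Fin k → F satisfies hammingNorm (G u) ≥ n - k + 1, where hammingNorm counts the number of nonzero coordinates. -/

import Mathlib

/-!
Reed–Solomon codes: encode `u` as the polynomial `∑ uⱼ Xʲ` of degree `< k` and evaluate it at `n`
distinct points of `F`. A nonzero polynomial of degree `< k` has at most `k - 1` roots, so at most
`k - 1` coordinates of a nonzero codeword vanish.
-/

open Polynomial Finset

theorem hammingNorm_add_card_filter_eq_zero {ι β : Type*} [Fintype ι] [Zero β] [DecidableEq β]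
    (x : ι → β) : hammingNorm x + #{i | x i = 0} = Fintype.card ι := by
  rw [hammingNorm, add_comm, card_filter_add_card_filter_not, card_univ]

section RootCount

variable {R ι : Type*} [CommRing R] [IsDomain R] [Fintype ι] [DecidableEq R]

theorem card_filter_eval_eq_zero_le_natDegree {p : R[X]} (hp : p ≠ 0) {α : ι → R}
    (hα : Function.Injective α) : #{i | p.eval (α i) = 0} ≤ p.natDegree := by
  rw [← card_image_of_injective _ hα]
  refine card_le_degree_of_subset_roots fun x hx => ?_
  obtain ⟨i, hi, rfl⟩ := mem_image.mp hx
  exact (mem_roots hp).mpr (mem_filter.mp hi).2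

theorem card_sub_natDegree_le_hammingNorm_eval {p : R[X]} (hp : p ≠ 0) {α : ι → R}
    (hα : Function.Injective α) :
    Fintype.card ι - p.natDegree ≤ hammingNorm fun i => p.eval (α i) := by
  have := hammingNorm_add_card_filter_eq_zero fun i => p.eval (α i)
  have := card_filter_eval_eq_zero_le_natDegree hp hα
  omega

end RootCount

section EvaluationCode

variable {R ι : Type*} [Semiring R] (α : ι → R) (k : ℕ)

/-- The evaluation code: `u` is sent to the values at the points `α i` of `∑ j, u j * X ^ j`. -/
noncomputable def evalCode : (Fin k → R) →ₗ[R] ι → R :=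
  LinearMap.pi (fun i => leval (α i)) ∘ₗ (degreeLT R k).subtype ∘ₗ
    (degreeLTEquiv R k).symm.toLinearMap

theorem evalCode_apply (u : Fin k → R) (i : ι) :
    evalCode α k u i = ((degreeLTEquiv R k).symm u : R[X]).eval (α i) :=
  rfl

end EvaluationCode

section EvaluationCodeWeight

variable {R ι : Type*} [CommRing R] [IsDomain R] [Fintype ι] [DecidableEq R] {α : ι → R} {k : ℕ}

theorem card_add_one_sub_le_hammingNorm_evalCode (hα : Function.Injective α) {u : Fin k → R}
    (hu : u ≠ 0) : Fintype.card ι + 1 - k ≤ hammingNorm (evalCode α k u) := by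
  set p := (degreeLTEquiv R k).symm u
  have hp : (p : R[X]) ≠ 0 :=
    Submodule.coe_eq_zero.not.mpr ((degreeLTEquiv R k).symm.map_ne_zero_iff.mpr hu)
  have hdeg : (p : R[X]).natDegree < k :=
    (natDegree_lt_iff_degree_lt hp).mpr (mem_degreeLT.mp p.2)
  have := card_sub_natDegree_le_hammingNorm_eval hp hα
  rw [show evalCode α k u = fun i => (p : R[X]).eval (α i) from funext (evalCode_apply α k u)]
  omega

theorem evalCode_injective (hα : Function.Injective α) (hk : k ≤ Fintype.card ι) :
    Function.Injective (evalCode α k) := by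
  refine (injective_iff_map_eq_zero _).mpr fun u hu => ?_
  by_contra hne
  have := card_add_one_sub_le_hammingNorm_evalCode hα hne
  rw [hu, hammingNorm_zero] at this
  omega

end EvaluationCodeWeight

theorem exists_mds_code (F : Type*) [Field F] [Fintype F] [DecidableEq F] (n k : ℕ)
    (hn : n ≤ Fintype.card F) (hk : k ≤ n) :
    ∃ G : (Fin k → F) →ₗ[F] (Fin n → F), Function.Injective G ∧
      ∀ u : Fin k → F, u ≠ 0 → n - k + 1 ≤ hammingNorm (G u) := by
  obtain ⟨α⟩ : Nonempty (Fin n ↪ F) :=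
    Function.Embedding.nonempty_of_card_le (by simpa using hn)
  refine ⟨evalCode α k, evalCode_injective α.injective (by simpa using hk), fun u hu => ?_⟩
  have := card_add_one_sub_le_hammingNorm_evalCode α.injective hu
  rw [Fintype.card_fin] at this
  omega
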